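/- (Theorem 3.5, direction 2.) Under the same hypotheses on V, d, α, β as follows — V : ℝ^d → ℝ is C³ and Lipschitz with uniformly bounded Hessian, all stationary points of V non-degenerate, and d(·,·) satisfying: for each x, y ↦ d(x,y) convex and C² with ∇²_y d(x,y) = 0 iff y = x; d(x,y) ≥ 0 with equality iff x = y; and for every ε > 0 there is λ̄_ε > 0 with (∇²_y d(x,y))(v,v) ≥ λ̄_ε·‖v‖² whenever ‖x−y‖ ≥ ε; α + β > 1; W̃_ρ(y; x, u) := (1−α)·V(y) + α·V(y − ⟨u, y−x⟩·u) − β·V(x + ⟨u, y−x⟩·u) + ρ·d(x,y) — there exists ρ̄ > 0 such that for all ρ > ρ̄ the following holds: if (y*, x*, u*) with u* a unit vector satisfies (i) W̃_ρ(y*; x*, u*) ≤ W̃_ρ(y; x*, u*) for all y ∈ ℝ^d, (ii) ½‖x* − y*‖² ≤ ½‖x − y*‖² for all x ∈ ℝ^d, and (iii) (u*)ᵀ(∇²V(x*))u* ≤ vᵀ(∇²V(x*))v for all unit vectors v, then y* = x*, u* is a unit eigenvector of ∇²V(x*) for the smallest eigenvalue λ₁(x*), ∇V(x*) = 0, and λ₁(x*)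 < 0 < λ₂(x*), i.e., x* is a non-degenerate index-1 saddle point of V. -/

import Mathlib

open scoped RealInnerProductSpace

set_option maxHeartbeats 1000000

/-- The Hessian of `V` at `x`, as the (continuous linear) derivative of the gradient. -/
noncomputable def hess {n : ℕ} (V : EuclideanSpace ℝ (Fin n) → ℝ)
    (x : EuclideanSpace ℝ (Fin n)) :
    EuclideanSpace ℝ (Fin n) →L[ℝ] EuclideanSpace ℝ (Fin n) :=
  fderiv ℝ (gradient V) x

/-- The penalized auxiliary function
`W̃_ρ(y; x, u) = (1-α)V(y) + αV(y - ⟨u,y-x⟩u) - βV(x + ⟨u,y-x⟩u) + ρ·d(x,y)`. -/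
noncomputable def Wtilde {n : ℕ} (V : EuclideanSpace ℝ (Fin n) → ℝ)
    (p : EuclideanSpace ℝ (Fin n) → EuclideanSpace ℝ (Fin n) → ℝ)
    (α β ρ : ℝ) (x u y : EuclideanSpace ℝ (Fin n)) : ℝ :=
  (1 - α) * V y + α * V (y - ⟪u, y - x⟫ • u) - β * V (x + ⟪u, y - x⟫ • u) + ρ * p x y

/-- The index-1 region `Ω₁ = {x : λ₁(x) < 0 < λ₂(x)}`, where `lam i x` is the `i`-th
(ascending) eigenvalue of the Hessian of `V` at `x`. -/
def Omega1 {n : ℕ} (hn : 2 ≤ n) (lam : Fin n → EuclideanSpace ℝ (Fin n) → ℝ) :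
    Set (EuclideanSpace ℝ (Fin n)) :=
  {x | lam ⟨0, by omega⟩ x < 0 ∧ 0 < lam ⟨1, by omega⟩ x}

section aux
variable {n : ℕ}
local notation "E" => EuclideanSpace ℝ (Fin n)

lemma aux_line_deriv (f : E → ℝ) (hf : Differentiable ℝ f) (b v : E) (t : ℝ) :
    HasDerivAt (fun s : ℝ => f (b + s • v)) (fderiv ℝ f (b + t • v) v) t := by
  have h1 : HasDerivAt (fun s : ℝ => b + s • v) v t := by
    simpa using ((hasDerivAt_id t).smul_const v).const_add b
  exact (hf (b + t • v)).hasFDerivAt.comp_hasDerivAt t h1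

lemma aux_line_deriv2 (f : E → ℝ) (hf : ContDiff ℝ 2 f) (b v : E) :
    HasDerivAt (fun t : ℝ => fderiv ℝ f (b + t • v) v)
      (fderiv ℝ (fderiv ℝ f) b v v) 0 := by
  have hd1 : ContDiff ℝ 1 (fderiv ℝ f) := hf.fderiv_right (by norm_num)
  have h2 : HasFDerivAt (fderiv ℝ f) (fderiv ℝ (fderiv ℝ f) b) b :=
    (hd1.differentiable (by norm_num) b).hasFDerivAt
  have h3 : HasFDerivAt (fun z : E => fderiv ℝ f z v)
      ((fderiv ℝ (fderiv ℝ f) b).flip v) b := by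
    simpa using h2.clm_apply (hasFDerivAt_const v b)
  have h1 : HasDerivAt (fun s : ℝ => b + s • v) v 0 := by
    simpa using ((hasDerivAt_id (0:ℝ)).smul_const v).const_add b
  rw [show b = b + (0:ℝ) • v by simp] at h3
  have := h3.comp_hasDerivAt 0 h1
  simp at this
  exact this

lemma aux_min_first_second (f f' : ℝ → ℝ) (c : ℝ) (hmin : ∀ t, f 0 ≤ f t)
    (hd : ∀ t, HasDerivAt f (f' t) t) (hd2 : HasDerivAt f' c 0) :
    f' 0 = 0 ∧ 0 ≤ c := by
  have hloc : IsLocalMin f 0 := Filter.Eventually.of_forall hmin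
  have h0 : f' 0 = 0 := hloc.hasDerivAt_eq_zero (hd 0)
  refine ⟨h0, ?_⟩
  by_contra hc
  push_neg at hc
  have hslope : Filter.Tendsto (slope f' 0) (nhdsWithin 0 {(0:ℝ)}ᶜ) (nhds c) :=
    hasDerivAt_iff_tendsto_slope.mp hd2
  have hev : ∀ᶠ t in nhdsWithin 0 (Set.Ioi 0), slope f' 0 t < c / 2 := by
    refine Filter.Eventually.filter_mono (nhdsWithin_mono 0 ?_)
      (hslope.eventually_lt_const (show c < c / 2 by linarith))
    intro t ht
    simp only [Set.mem_compl_iff, Set.mem_singleton_iff]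
    exact ne_of_gt ht
  obtain ⟨δ, hδ, hsub⟩ := mem_nhdsGT_iff_exists_Ioo_subset.mp hev
  have hneg : ∀ t ∈ Set.Ioo (0:ℝ) δ, f' t < 0 := by
    intro t ht
    have hs : slope f' 0 t < c / 2 := hsub ht
    rw [slope_def_field, h0] at hs
    have ht0 : 0 < t := ht.1
    have h2 : (f' t - 0) / (t - 0) = f' t / t := by ring_nf
    rw [h2] at hs
    have := (div_lt_iff₀ ht0).mp hs
    nlinarith
  have hanti : StrictAntiOn f (Set.Icc 0 (δ/2)) := by
    refine strictAntiOn_of_deriv_neg (convex_Icc _ _)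
      (Continuous.continuousOn ?_) ?_
    · exact continuous_iff_continuousAt.mpr (fun t => (hd t).continuousAt)
    · intro t ht
      rw [interior_Icc] at ht
      rw [(hd t).deriv]
      have hδ' : 0 < δ := Set.mem_Ioi.mp hδ
      exact hneg t ⟨ht.1, by linarith [ht.2]⟩
  have hδ' : 0 < δ := Set.mem_Ioi.mp hδ
  have h1 : f (δ/2) < f 0 :=
    hanti (Set.left_mem_Icc.mpr (by linarith)) (Set.right_mem_Icc.mpr (by linarith)) (by linarith)
  exact absurd (hmin (δ/2)) (not_le.mpr h1)

/-- The Riesz map as a real continuous linear map. -/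
noncomputable def rieszR (n : ℕ) :
    (EuclideanSpace ℝ (Fin n) →L[ℝ] ℝ) →L[ℝ] EuclideanSpace ℝ (Fin n) where
  toFun f := (InnerProductSpace.toDual ℝ (EuclideanSpace ℝ (Fin n))).symm f
  map_add' f g := by simp
  map_smul' r f := by
    simp [LinearIsometryEquiv.map_smulₛₗ, starRingEnd_apply, star_trivial]
  cont := (InnerProductSpace.toDual ℝ (EuclideanSpace ℝ (Fin n))).symm.continuous

lemma rieszR_inner (f : EuclideanSpace ℝ (Fin n) →L[ℝ] ℝ) (w : E) :
    ⟪rieszR n f, w⟫ = f w :=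
  InnerProductSpace.toDual_symm_apply

lemma gradient_eq_riesz (V : E → ℝ) (z : E) :
    gradient V z = rieszR n (fderiv ℝ V z) := rfl

lemma aux_hess_inner (V : E → ℝ) (hV : ContDiff ℝ 3 V) (x w : E) :
    ⟪hess V x w, w⟫ = fderiv ℝ (fderiv ℝ V) x w w := by
  have hV2 : ContDiff ℝ 2 (fderiv ℝ V) := hV.fderiv_right (by norm_num)
  have hfd : DifferentiableAt ℝ (fderiv ℝ V) x := (hV2.differentiable (by norm_num)) x
  have hcomp : HasFDerivAt (gradient V) ((rieszR n).comp (fderiv ℝ (fderiv ℝ V) x)) x := by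
    have := ((rieszR n).hasFDerivAt (x := fderiv ℝ V x)).comp x hfd.hasFDerivAt
    exact this
  have hhess : hess V x = (rieszR n).comp (fderiv ℝ (fderiv ℝ V) x) := hcomp.fderiv
  rw [hhess]
  simp only [ContinuousLinearMap.coe_comp', Function.comp_apply]
  rw [rieszR_inner]

end aux

/-- Theorem 3.5, direction 2: under the assumptions on `V` and the penalty
`p`, with `α + β > 1`, there is `ρ̄ > 0` such that for all `ρ > ρ̄`: if `(y*, x*, u*)` with
`u*` a unit vector is a Nash equilibrium of the game `G₃` — (i) `y*` minimizes
`y ↦ W̃_ρ(y; x*, u*)`, (ii) `x*` minimizes `x ↦ ½‖x - y*‖²`, (iii) `u*` minimizes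
`v ↦ vᵀ(∇²V(x*))v` over unit vectors — then `y* = x*`, `u*` is a unit eigenvector of
`∇²V(x*)` for `λ₁(x*)`, `∇V(x*) = 0` and `λ₁(x*) < 0 < λ₂(x*)`. -/

theorem stmt_17 {n : ℕ} (hn : 2 ≤ n)
    (V : EuclideanSpace ℝ (Fin n) → ℝ)
    (hV : ContDiff ℝ 3 V)
    (hVLip : ∃ L : ℝ, ∀ a b : EuclideanSpace ℝ (Fin n), |V a - V b| ≤ L * ‖a - b‖)
    (lamL lamU : ℝ)
    (hHessBdd : ∀ x v : EuclideanSpace ℝ (Fin n),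
      lamL * ‖v‖ ^ 2 ≤ ⟪hess V x v, v⟫ ∧ ⟪hess V x v, v⟫ ≤ lamU * ‖v‖ ^ 2)
    (lam : Fin n → EuclideanSpace ℝ (Fin n) → ℝ)
    (hlamMono : ∀ x : EuclideanSpace ℝ (Fin n), Monotone fun i => lam i x)
    (hlamEig : ∀ x : EuclideanSpace ℝ (Fin n), ∃ w : Fin n → EuclideanSpace ℝ (Fin n),
      Orthonormal ℝ w ∧ ∀ i, hess V x (w i) = lam i x • w i)
    (hnondeg : ∀ x : EuclideanSpace ℝ (Fin n), gradient V x = 0 → ∀ i, lam i x ≠ 0)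
    (p : EuclideanSpace ℝ (Fin n) → EuclideanSpace ℝ (Fin n) → ℝ)
    (hpConv : ∀ x, ConvexOn ℝ Set.univ (p x))
    (hpC2 : ∀ x, ContDiff ℝ 2 (p x))
    (hpHess0 : ∀ x y, iteratedFDeriv ℝ 2 (p x) y = 0 ↔ y = x)
    (hpNonneg : ∀ x y, 0 ≤ p x y)
    (hpZero : ∀ x y, p x y = 0 ↔ x = y)
    (hpStrong : ∀ ε : ℝ, 0 < ε → ∃ lamε : ℝ, 0 < lamε ∧
      ∀ x y : EuclideanSpace ℝ (Fin n), ε ≤ ‖x - y‖ →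
        ∀ v, lamε * ‖v‖ ^ 2 ≤ iteratedFDeriv ℝ 2 (p x) y ![v, v])
    (α β : ℝ) (hab : α + β > 1) :
    ∃ ρbar : ℝ, 0 < ρbar ∧ ∀ ρ : ℝ, ρ > ρbar →
      ∀ ystar xstar ustar : EuclideanSpace ℝ (Fin n), ‖ustar‖ = 1 →
        (∀ y, Wtilde V p α β ρ xstar ustar ystar ≤ Wtilde V p α β ρ xstar ustar y) →
        (∀ x : EuclideanSpace ℝ (Fin n),
          (1 / 2) * ‖xstar - ystar‖ ^ 2 ≤ (1 / 2) * ‖x - ystar‖ ^ 2) →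
        (∀ v : EuclideanSpace ℝ (Fin n), ‖v‖ = 1 →
          ⟪hess V xstar ustar, ustar⟫ ≤ ⟪hess V xstar v, v⟫) →
        ystar = xstar ∧
        hess V xstar ustar = lam ⟨0, by omega⟩ xstar • ustar ∧
        gradient V xstar = 0 ∧
        lam ⟨0, by omega⟩ xstar < 0 ∧ 0 < lam ⟨1, by omega⟩ xstar := by
  refine ⟨1, one_pos, fun ρ hρ ystar xstar ustar hu hN1 hN2 hN3 => ?_⟩
  -- Step A : ystar = xstar
  have hyx : ystar = xstar := by
    have h := hN2 ystar
    simp only [sub_self, norm_zero] at h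
    have hle0 : ‖xstar - ystar‖ ^ 2 ≤ 0 := by nlinarith
    have h2 : ‖xstar - ystar‖ = 0 := by
      have heq0 : ‖xstar - ystar‖ ^ 2 = 0 := le_antisymm hle0 (by positivity)
      exact pow_eq_zero_iff (by norm_num) |>.mp heq0
    exact (norm_sub_eq_zero_iff.mp h2).symm
  subst hyx
  set x := ystar with hxdef
  set u := ustar with hudef
  have hVd : Differentiable ℝ V := hV.differentiable (by norm_num)
  have hV2 : ContDiff ℝ 2 V := hV.of_le (by norm_num)
  have hpd : Differentiable ℝ (p x) := (hpC2 x).differentiable (by norm_num)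
  have huu : ⟪u, u⟫ = 1 := by
    rw [real_inner_self_eq_norm_sq, hu]; norm_num
  -- p facts at x
  have hp0 : p x x = 0 := (hpZero x x).mpr rfl
  have hpfd : fderiv ℝ (p x) x = 0 := by
    refine IsLocalMin.fderiv_eq_zero ?_
    exact Filter.Eventually.of_forall (fun y => hp0 ▸ hpNonneg x y)
  have hp2 : ∀ v, fderiv ℝ (fderiv ℝ (p x)) x v v = 0 := by
    intro v
    have h0 : iteratedFDeriv ℝ 2 (p x) x = 0 := (hpHess0 x x).mpr rfl
    have := iteratedFDeriv_two_apply (𝕜 := ℝ) (p x) x ![v, v]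
    rw [h0] at this
    simpa using this.symm
  -- key first/second order conditions along each direction v
  have key : ∀ v : EuclideanSpace ℝ (Fin n),
      ((1-α) * fderiv ℝ V x v + α * fderiv ℝ V x (v - ⟪u,v⟫ • u)
        - β * fderiv ℝ V x (⟪u,v⟫ • u) = 0) ∧
      (0 ≤ (1-α) * fderiv ℝ (fderiv ℝ V) x v v
        + α * fderiv ℝ (fderiv ℝ V) x (v - ⟪u,v⟫ • u) (v - ⟪u,v⟫ • u)
        - β * fderiv ℝ (fderiv ℝ V) x (⟪u,v⟫ • u) (⟪u,v⟫ • u)) := by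
    intro v
    set c : ℝ := ⟪u, v⟫ with hc
    have hFW : ∀ t : ℝ,
        Wtilde V p α β ρ x u (x + t • v)
          = (1-α) * V (x + t • v) + α * V (x + t • (v - c • u))
            - β * V (x + t • (c • u)) + ρ * p x (x + t • v) := by
      intro t
      have hinner : ⟪u, (x + t • v) - x⟫ = t * c := by
        rw [add_sub_cancel_left, real_inner_smul_right]
      rw [Wtilde, hinner]
      have e1 : (x + t • v) - (t * c) • u = x + t • (v - c • u) := by
        rw [smul_sub, smul_smul]; abel
      have e2 : x + (t * c) • u = x + t • (c • u) := by
        rw [smul_smul]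
      rw [e1, e2]
    have hmin : ∀ t : ℝ,
        (fun t : ℝ => (1-α) * V (x + t • v) + α * V (x + t • (v - c • u))
            - β * V (x + t • (c • u)) + ρ * p x (x + t • v)) 0
          ≤ (fun t : ℝ => (1-α) * V (x + t • v) + α * V (x + t • (v - c • u))
            - β * V (x + t • (c • u)) + ρ * p x (x + t • v)) t := by
      intro t
      simp only
      rw [← hFW 0, ← hFW t]
      have h0 : x + (0:ℝ) • v = x := by simp
      rw [h0]
      exact hN1 (x + t • v)
    have hd : ∀ t : ℝ, HasDerivAt
        (fun t : ℝ => (1-α) * V (x + t • v) + α * V (x + t • (v - c • u))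
            - β * V (x + t • (c • u)) + ρ * p x (x + t • v))
        ((1-α) * fderiv ℝ V (x + t • v) v
          + α * fderiv ℝ V (x + t • (v - c • u)) (v - c • u)
          - β * fderiv ℝ V (x + t • (c • u)) (c • u)
          + ρ * fderiv ℝ (p x) (x + t • v) v) t := by
      intro t
      exact ((((aux_line_deriv V hVd x v t).const_mul (1-α)).add
        ((aux_line_deriv V hVd x (v - c • u) t).const_mul α)).sub
        ((aux_line_deriv V hVd x (c • u) t).const_mul β)).add
        ((aux_line_deriv (p x) hpd x v t).const_mul ρ)
    have hd2 : HasDerivAt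
        (fun t : ℝ => (1-α) * fderiv ℝ V (x + t • v) v
          + α * fderiv ℝ V (x + t • (v - c • u)) (v - c • u)
          - β * fderiv ℝ V (x + t • (c • u)) (c • u)
          + ρ * fderiv ℝ (p x) (x + t • v) v)
        ((1-α) * fderiv ℝ (fderiv ℝ V) x v v
          + α * fderiv ℝ (fderiv ℝ V) x (v - c • u) (v - c • u)
          - β * fderiv ℝ (fderiv ℝ V) x (c • u) (c • u)
          + ρ * fderiv ℝ (fderiv ℝ (p x)) x v v) 0 := by
      exact ((((aux_line_deriv2 V hV2 x v).const_mul (1-α)).add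
        ((aux_line_deriv2 V hV2 x (v - c • u)).const_mul α)).sub
        ((aux_line_deriv2 V hV2 x (c • u)).const_mul β)).add
        ((aux_line_deriv2 (p x) (hpC2 x) x v).const_mul ρ)
    obtain ⟨hfo, hso⟩ := aux_min_first_second _ _ _ hmin hd hd2
    constructor
    · simp only [zero_smul, add_zero, hpfd, ContinuousLinearMap.zero_apply, mul_zero] at hfo
      linarith [hfo]
    · rw [hp2 v, mul_zero, add_zero] at hso
      exact hso
  -- First order: gradient V x = 0
  have hDu : fderiv ℝ V x u = 0 := by
    have h := (key u).1
    rw [huu, one_smul, sub_self, map_zero] at h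
    have hfac : (1 - α - β) * fderiv ℝ V x u = 0 := by linear_combination h
    rcases mul_eq_zero.mp hfac with h' | h'
    · exfalso; linarith
    · exact h'
  have hDv : ∀ v, fderiv ℝ V x v = 0 := by
    intro v
    have h := (key v).1
    rw [map_sub, map_smul] at h
    simp only [hDu, smul_zero, sub_zero, mul_zero] at h
    linear_combination h
  have hfVx : fderiv ℝ V x = 0 := by
    ext v
    simpa using hDv v
  have hgrad : gradient V x = 0 := by
    rw [gradient_eq_riesz, hfVx, map_zero]
  -- Second order along u : ⟪H u, u⟫ ≤ 0
  have hHuu : ⟪hess V x u, u⟫ ≤ 0 := by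
    have h := (key u).2
    rw [huu, one_smul, sub_self] at h
    simp only [map_zero, ContinuousLinearMap.zero_apply, mul_zero, add_zero] at h
    rw [aux_hess_inner V hV x u]
    nlinarith [h]
  -- Second order orthogonal to u : 0 ≤ ⟪H v, v⟫ for ⟪u,v⟫ = 0
  have hperp : ∀ v, ⟪u, v⟫ = 0 → 0 ≤ ⟪hess V x v, v⟫ := by
    intro v hv
    have h := (key v).2
    rw [hv, zero_smul, sub_zero] at h
    simp only [map_zero, ContinuousLinearMap.zero_apply, mul_zero, sub_zero] at h
    rw [aux_hess_inner V hV x v]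
    nlinarith [h]
  -- Linear algebra with the eigenbasis
  obtain ⟨w, hw, heig⟩ := hlamEig x
  haveI : Nonempty (Fin n) := ⟨⟨0, by omega⟩⟩
  set i0 : Fin n := ⟨0, by omega⟩ with hi0
  set i1 : Fin n := ⟨1, by omega⟩ with hi1
  have hcard : Fintype.card (Fin n) = Module.finrank ℝ (EuclideanSpace ℝ (Fin n)) := by
    simp [finrank_euclideanSpace_fin]
  set B := basisOfOrthonormalOfCardEqFinrank hw hcard with hBdef
  have hB : ⇑B = w := coe_basisOfOrthonormalOfCardEqFinrank hw hcard
  have hwON : Orthonormal ℝ ⇑B := by rw [hB]; exact hw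
  set OB := B.toOrthonormalBasis hwON with hOBdef
  have hOB : ⇑OB = w := by rw [Module.Basis.coe_toOrthonormalBasis, hB]
  set c : Fin n → ℝ := fun i => ⟪w i, u⟫ with hcdef
  have hexp : ∑ i, c i • w i = u := by
    have := OB.sum_repr u
    simp_rw [OrthonormalBasis.repr_apply_apply, hOB] at this
    exact this
  have hwnorm : ∀ i, ⟪w i, w i⟫ = 1 := by
    intro i
    rw [real_inner_self_eq_norm_sq, hw.1 i]; norm_num
  have hworth : ∀ i j, i ≠ j → ⟪w i, w j⟫ = 0 := fun i j hij => hw.2 hij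
  -- inner of a combination with u
  have hinneru : ∀ a : Fin n → ℝ, ⟪∑ i, a i • w i, u⟫ = ∑ i, a i * c i := by
    intro a
    rw [sum_inner]
    congr 1
    funext i
    rw [real_inner_smul_left]
  have hS1 : ∑ i, c i * c i = 1 := by
    have := hinneru c
    rw [hexp, huu] at this
    exact this.symm
  have hHu_sum : hess V x u = ∑ i, (c i * lam i x) • w i := by
    conv_lhs => rw [← hexp]
    rw [map_sum]
    congr 1
    funext i
    rw [ContinuousLinearMap.map_smul, heig i, smul_smul]
  have hS2 : ⟪hess V x u, u⟫ = ∑ i, (c i * lam i x) * c i := by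
    rw [hHu_sum, hinneru]
  have hmono : ∀ i : Fin n, lam i0 x ≤ lam i x := by
    intro i
    exact hlamMono x (by simp [hi0, Fin.le_def])
  have hle : ⟪hess V x u, u⟫ ≤ lam i0 x := by
    have h := hN3 (w i0) (hw.1 i0)
    rw [heig i0, real_inner_smul_left, hwnorm i0, mul_one] at h
    exact h
  have hge : lam i0 x ≤ ⟪hess V x u, u⟫ := by
    rw [hS2]
    calc lam i0 x = ∑ i, lam i0 x * (c i * c i) := by
          rw [← Finset.mul_sum, hS1, mul_one]
      _ ≤ ∑ i, (c i * lam i x) * c i := by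
          apply Finset.sum_le_sum
          intro i _
          nlinarith [hmono i, mul_self_nonneg (c i)]
  have hRay : ⟪hess V x u, u⟫ = lam i0 x := le_antisymm hle hge
  -- each coefficient
  have hsum0 : ∑ i, (lam i x - lam i0 x) * (c i * c i) = 0 := by
    have h1 : ∑ i, (lam i x - lam i0 x) * (c i * c i)
        = (∑ i, (c i * lam i x) * c i) - ∑ i, lam i0 x * (c i * c i) := by
      rw [← Finset.sum_sub_distrib]
      congr 1
      funext i
      ring
    rw [h1, ← Finset.mul_sum, hS1, mul_one, ← hS2, hRay, sub_self]
  have hcoef : ∀ i : Fin n, c i * lam i x = c i * lam i0 x := by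
    intro i
    have hz := (Finset.sum_eq_zero_iff_of_nonneg (fun i _ => by
      nlinarith [hmono i, mul_self_nonneg (c i)])).mp hsum0 i (Finset.mem_univ i)
    rcases mul_eq_zero.mp hz with h' | h'
    · have : lam i x = lam i0 x := by linarith
      rw [this]
    · have : c i = 0 := by nlinarith [h']
      rw [this, zero_mul, zero_mul]
  have hEig : hess V x u = lam i0 x • u := by
    rw [hHu_sum]
    conv_rhs => rw [← hexp]
    rw [Finset.smul_sum]
    congr 1
    funext i
    rw [smul_smul, hcoef i, mul_comm]
  -- lam i0 x < 0
  have hlam0_ne : lam i0 x ≠ 0 := hnondeg x hgrad i0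
  have hlam0_neg : lam i0 x < 0 := lt_of_le_of_ne (hRay ▸ hHuu) hlam0_ne
  -- c i0 ≠ 0
  have hci0 : c i0 ≠ 0 := by
    intro h0
    have hv : ⟪u, w i0⟫ = 0 := by rw [real_inner_comm]; exact h0
    have := hperp (w i0) hv
    rw [heig i0, real_inner_smul_left, hwnorm i0, mul_one] at this
    linarith
  -- the second eigenvalue is positive
  have hii : i0 ≠ i1 := by
    simp only [hi0, hi1, ne_eq, Fin.mk.injEq]
    omega
  have hlam1_pos : 0 < lam i1 x := by
    set v : EuclideanSpace ℝ (Fin n) := (-(c i1)) • w i0 + (c i0) • w i1 with hvdef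
    have hcu0 : ⟪u, w i0⟫ = c i0 := by rw [real_inner_comm]
    have hcu1 : ⟪u, w i1⟫ = c i1 := by rw [real_inner_comm]
    have hvperp : ⟪u, v⟫ = 0 := by
      rw [hvdef, inner_add_right, real_inner_smul_right, real_inner_smul_right, hcu0, hcu1]
      ring
    have hHv : hess V x v = (-(c i1) * lam i0 x) • w i0 + (c i0 * lam i1 x) • w i1 := by
      rw [hvdef, map_add, ContinuousLinearMap.map_smul, ContinuousLinearMap.map_smul,
        heig i0, heig i1, smul_smul, smul_smul]
    have hinnerHvv : ⟪hess V x v, v⟫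
        = (c i1 * c i1) * lam i0 x + (c i0 * c i0) * lam i1 x := by
      rw [hHv, hvdef]
      rw [inner_add_left, inner_add_right, inner_add_right]
      rw [real_inner_smul_left, real_inner_smul_left, real_inner_smul_left,
        real_inner_smul_left, real_inner_smul_right, real_inner_smul_right,
        real_inner_smul_right, real_inner_smul_right]
      rw [hwnorm i0, hwnorm i1, hworth i0 i1 hii, hworth i1 i0 (Ne.symm hii)]
      ring
    have hpos := hperp v hvperp
    rw [hinnerHvv] at hpos
    have h1 : 0 ≤ lam i1 x := by
      by_contra hneg1
      push_neg at hneg1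
      have hc0 : 0 < c i0 * c i0 := mul_self_pos.mpr hci0
      have t1 : (c i0 * c i0) * lam i1 x < 0 := mul_neg_of_pos_of_neg hc0 hneg1
      have t2 : (c i1 * c i1) * lam i0 x ≤ 0 :=
        mul_nonpos_of_nonneg_of_nonpos (mul_self_nonneg _) (le_of_lt hlam0_neg)
      linarith
    have hne : lam i1 x ≠ 0 := hnondeg x hgrad i1
    exact lt_of_le_of_ne h1 (Ne.symm hne)
  refine ⟨rfl, ?_, hgrad, ?_, ?_⟩
  · exact hEig
  · exact hlam0_neg
  · exact hlam1_pos
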